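/- Let u ∈ ℝ⁴ be unit timelike and ρ, p real numbers with ρ + p ≠ 0, and let R = (ρ+p)(ηu)(ηu)ᵀ + ((ρ-p)/2)·η. Define R̂ = ηR, r = tr R̂, N̂ = R̂ - (r/4)·Id, let s be the unique real number with s³ = -(8/3)·tr(N̂³), and Γ = (1/4)·Id - (1/s)·N̂. Then s = ρ + p ≠ 0, r = ρ - 3p, Γ = -u(ηu)ᵀ, Γ² = Γ, xᵀ(ηΓ)x < 0 for every timelike vector x, and ρ = (3s+r)/4, p = (s-r)/4. -/

import Mathlib

/-!
With `Γ₀ = -u(ηu)ᵀ`, the identity `⟨u, u⟩ = -1` makes `Γ₀` an idempotent of trace `1`, and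
`ηR = ((ρ - p)/2) Id - (ρ + p) Γ₀`. Hence `r = ρ - 3p` and `N̂ = (ρ + p)(¼ Id - Γ₀)`. For an
idempotent, `(¼ Id - Γ₀)³ = (1/64) Id - (7/16) Γ₀`, of trace `-3/8`, so `s³ = (ρ + p)³`, i.e.
`s = ρ + p`, and then `Γ = Γ₀`. Finally `xᵀηΓ₀x = -⟨x, u⟩²`, and two timelike vectors are never
orthogonal by the reversed Cauchy–Schwarz inequality.
-/

open Matrix

/-- The Minkowski metric matrix η = diag(-1,1,1,1) in an orthonormal frame of ℝ⁴. -/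
noncomputable def η : Matrix (Fin 4) (Fin 4) ℝ := Matrix.diagonal ![-1, 1, 1, 1]

/-- Minkowski inner product ⟨x,y⟩ = xᵀ η y. -/
noncomputable def mink (x y : Fin 4 → ℝ) : ℝ := x ⬝ᵥ (η *ᵥ y)

theorem IsIdempotentElem.smul_one_sub_pow {K A : Type*} [CommRing K] [Ring A] [Algebra K A]
    {Q : A} (hQ : IsIdempotentElem Q) (c : K) (n : ℕ) :
    (c • 1 - Q) ^ n = c ^ n • 1 + ((c - 1) ^ n - c ^ n) • Q := by
  induction n with
  | zero => simp
  | succ n ih =>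
    rw [pow_succ, ih]
    simp only [add_mul, mul_sub, smul_mul_assoc, mul_smul_comm, one_mul, mul_one,
      hQ.eq]
    module

theorem Matrix.trace_smul_one_sub_pow_of_isIdempotentElem {n K : Type*} [Fintype n]
    [DecidableEq n] [CommRing K] {Q : Matrix n n K} (hQ : IsIdempotentElem Q) (c : K) (k : ℕ) :
    trace ((c • 1 - Q) ^ k) = c ^ k * Fintype.card n + ((c - 1) ^ k - c ^ k) * trace Q := by
  rw [hQ.smul_one_sub_pow, trace_add, trace_smul, trace_smul, trace_one, smul_eq_mul,
    smul_eq_mul]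

theorem eta_mul_eta : η * η = 1 := by
  rw [η, diagonal_mul_diagonal, ← diagonal_one]
  congr 1
  ext i
  fin_cases i <;> norm_num

theorem mink_apply (x y : Fin 4 → ℝ) :
    mink x y = -(x 0 * y 0) + x 1 * y 1 + x 2 * y 2 + x 3 * y 3 := by
  simp [mink, η, mulVec_diagonal, dotProduct, Fin.sum_univ_four]

theorem mink_ne_zero_of_timelike {x y : Fin 4 → ℝ} (hx : mink x x < 0) (hy : mink y y < 0) :
    mink x y ≠ 0 := by
  intro hxy
  rw [mink_apply] at hx hy hxy
  have hcs : (x 1 * y 1 + x 2 * y 2 + x 3 * y 3) ^ 2 ≤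
      (x 1 ^ 2 + x 2 ^ 2 + x 3 ^ 2) * (y 1 ^ 2 + y 2 ^ 2 + y 3 ^ 2) := by
    nlinarith [sq_nonneg (x 1 * y 2 - x 2 * y 1), sq_nonneg (x 1 * y 3 - x 3 * y 1),
      sq_nonneg (x 2 * y 3 - x 3 * y 2)]
  have hlt : (x 1 ^ 2 + x 2 ^ 2 + x 3 ^ 2) * (y 1 ^ 2 + y 2 ^ 2 + y 3 ^ 2) < x 0 ^ 2 * y 0 ^ 2 :=
    mul_lt_mul'' (by linarith) (by linarith) (by positivity) (by positivity)
  rw [show x 1 * y 1 + x 2 * y 2 + x 3 * y 3 = x 0 * y 0 by linarith, mul_pow] at hcs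
  linarith

/-- For `⟨u, u⟩ = -1`, the projection `x ↦ -⟨u, x⟩ u` onto `ℝ u` along `u^⊥`. -/
noncomputable def lineProj (u : Fin 4 → ℝ) : Matrix (Fin 4) (Fin 4) ℝ := -vecMulVec u (η *ᵥ u)

theorem isIdempotentElem_lineProj {u : Fin 4 → ℝ} (hu : mink u u = -1) :
    IsIdempotentElem (lineProj u) := by
  rw [IsIdempotentElem, lineProj, neg_mul_neg, vecMulVec_mul_vecMulVec, dotProduct_comm, ← mink,
    hu, neg_one_smul, vecMulVec_neg]

theorem trace_lineProj (u : Fin 4 → ℝ) : (lineProj u).trace = -mink u u := by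
  rw [lineProj, trace_neg, trace_vecMulVec, mink]

theorem eta_mul_lineProj (u : Fin 4 → ℝ) : η * lineProj u = -vecMulVec (η *ᵥ u) (η *ᵥ u) := by
  rw [lineProj, Matrix.mul_neg, mul_vecMulVec]

theorem dotProduct_eta_mul_lineProj_mulVec (u x : Fin 4 → ℝ) :
    x ⬝ᵥ ((η * lineProj u) *ᵥ x) = -mink x u ^ 2 := by
  rw [eta_mul_lineProj, neg_mulVec, vecMulVec_mulVec, dotProduct_neg, op_smul_eq_smul,
    dotProduct_smul, dotProduct_comm, ← mink, smul_eq_mul, sq]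

theorem eta_mul_perfectFluid (u : Fin 4 → ℝ) (ρ p : ℝ) :
    η * ((ρ + p) • vecMulVec (η *ᵥ u) (η *ᵥ u) + ((ρ - p) / 2) • η) =
      ((ρ - p) / 2) • 1 - (ρ + p) • lineProj u := by
  rw [Matrix.mul_add, Matrix.mul_smul, Matrix.mul_smul, mul_vecMulVec, mulVec_mulVec, eta_mul_eta,
    one_mulVec, lineProj, smul_neg, sub_neg_eq_add, add_comm]

theorem stmt_2 (u : Fin 4 → ℝ) (hu : mink u u = -1)
    (ρ p : ℝ) (hρp : ρ + p ≠ 0)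
    (R : Matrix (Fin 4) (Fin 4) ℝ)
    (hR : R = (ρ + p) • vecMulVec (η *ᵥ u) (η *ᵥ u) + ((ρ - p) / 2) • η)
    (r : ℝ) (hr : r = (η * R).trace)
    (N : Matrix (Fin 4) (Fin 4) ℝ) (hN : N = η * R - (r / 4) • 1)
    (s : ℝ) (hs3 : s ^ 3 = -(8 / 3) * (N ^ 3).trace)
    (Γ : Matrix (Fin 4) (Fin 4) ℝ) (hΓ : Γ = (1 / 4 : ℝ) • 1 - (1 / s) • N) :
    s = ρ + p ∧ s ≠ 0 ∧ r = ρ - 3 * p ∧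
      Γ = -(vecMulVec u (η *ᵥ u)) ∧ Γ * Γ = Γ ∧
      (∀ x : Fin 4 → ℝ, mink x x < 0 → x ⬝ᵥ ((η * Γ) *ᵥ x) < 0) ∧
      ρ = (3 * s + r) / 4 ∧ p = (s - r) / 4 := by
  have hQ := isIdempotentElem_lineProj hu
  have htrQ : (lineProj u).trace = 1 := by rw [trace_lineProj, hu, neg_neg]
  have hηR : η * R = ((ρ - p) / 2) • 1 - (ρ + p) • lineProj u := hR ▸ eta_mul_perfectFluid u ρ p
  have hr' : r = ρ - 3 * p := by
    rw [hr, hηR, trace_sub, trace_smul, trace_smul, trace_one, htrQ, Fintype.card_fin]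
    push_cast
    ring
  have hN' : N = (ρ + p) • ((1 / 4 : ℝ) • 1 - lineProj u) := by
    rw [hN, hηR, hr']
    module
  have htrN : (N ^ 3).trace = -(3 / 8) * (ρ + p) ^ 3 := by
    rw [hN', smul_pow, trace_smul, trace_smul_one_sub_pow_of_isIdempotentElem hQ, htrQ,
      Fintype.card_fin]
    push_cast
    ring
  have hs : s = ρ + p := (Odd.pow_inj (by decide : Odd 3)).mp (by rw [hs3, htrN]; ring)
  have hΓ' : Γ = lineProj u := by
    rw [hΓ, hN', hs, smul_smul, one_div_mul_cancel hρp, one_smul, sub_sub_cancel]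
  refine ⟨hs, hs ▸ hρp, hr', hΓ', hΓ' ▸ hQ.eq, fun x hx => ?_, by rw [hs, hr']; ring,
    by rw [hs, hr']; ring⟩
  have hxu := mink_ne_zero_of_timelike hx (by rw [hu]; norm_num)
  rw [hΓ', dotProduct_eta_mul_lineProj_mulVec]
  exact neg_neg_of_pos (by positivity)
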